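/- arXiv:2201.02681 — 5 statements merged into one kernel-verified Lean document; each statement's English description precedes it below -/
import Mathlib

section
/- Let r_b > 1, let f : ℝ² → ℝ be measurable, and let p ∈ [1,2). Then sup_{ν∈ℝ} sup_{r∈[1,r_b]} ∫_ℝ ∫_ℝ |w|^p |w² − L²(1/r² − 1/r_b²) − 2ν|^{−p/2} |f(w,L)| dw dL ≤ 2 ‖f‖_{L¹(ℝ²)} + (4/(2−p)) ∫_ℝ sup_{w∈ℝ} |w f(w,L)| dL. -/
/-!
For fixed `L` the inner integral is `∫ |w|^p |w² - a|^(-p/2) |g w| dw` with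
`a = L²(1/r² - 1/r_b²) + 2ν`, and it is bounded uniformly in `a ∈ ℝ`. Where `w² ≤ 2|w² - a|`
the weight is at most `2^(p/2) ≤ 2`, which gives the `L¹` term. On the rest, `2a/3 < w² < 2a`,
write `|w|^p |g w| = |w|^(p-1) |w g w|` and pull out `sup |w g|`; the substitution `u = w²`
turns the remaining kernel into `∫_{2a/3}^{2a} u^(p/2-1) |u - a|^(-p/2) du`, and freezing
`u^(p/2-1)` at the left end of `[2a/3, a]` and of `[a, 2a]` bounds each half by `2/(2-p)`.
Tonelli in `L` finishes.
-/

open MeasureTheory ENNReal Set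

section SingularKernel

variable {q : ℝ}

lemma lintegral_Icc_abs_rpow_neg (hq : q < 1) {c : ℝ} (hc : 0 ≤ c) :
    ∫⁻ t in Icc 0 c, ENNReal.ofReal (|t| ^ (-q)) = ENNReal.ofReal (c ^ (1 - q) / (1 - q)) := by
  have hq' : -1 < -q := by linarith
  have hint : IntegrableOn (fun t : ℝ => t ^ (-q)) (Ioc 0 c) :=
    (intervalIntegral.intervalIntegrable_rpow' hq').1
  rw [setLIntegral_congr Ioc_ae_eq_Icc.symm,
    setLIntegral_congr_fun measurableSet_Ioc fun t ht => by rw [abs_of_pos ht.1],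
    ← ofReal_integral_eq_lintegral_ofReal hint
      ((ae_restrict_iff' measurableSet_Ioc).2 (.of_forall fun t ht => Real.rpow_nonneg ht.1.le _)),
    ← intervalIntegral.integral_of_le hc, integral_rpow (.inl hq'),
    Real.zero_rpow (by linarith), neg_add_eq_sub, sub_zero]

lemma lintegral_Icc_add_abs_sub_rpow_neg (hq : q < 1) (x : ℝ) {c : ℝ} (hc : 0 ≤ c) :
    ∫⁻ u in Icc x (x + c), ENNReal.ofReal (|u - x| ^ (-q)) =
      ENNReal.ofReal (c ^ (1 - q) / (1 - q)) := by
  rw [(measurePreserving_sub_right volume x).setLIntegral_comp_emb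
      (measurableEmbedding_subRight x) (fun t => ENNReal.ofReal (|t| ^ (-q))),
    image_sub_const_Icc, sub_self, add_sub_cancel_left, lintegral_Icc_abs_rpow_neg hq hc]

lemma lintegral_Icc_sub_abs_sub_rpow_neg (hq : q < 1) (x : ℝ) {c : ℝ} (hc : 0 ≤ c) :
    ∫⁻ u in Icc (x - c) x, ENNReal.ofReal (|u - x| ^ (-q)) =
      ENNReal.ofReal (c ^ (1 - q) / (1 - q)) := by
  simp_rw [abs_sub_comm _ x]
  rw [(Measure.measurePreserving_sub_left volume x).setLIntegral_comp_emb
      (measurableEmbedding_subLeft x) (fun t => ENNReal.ofReal (|t| ^ (-q))),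
    image_const_sub_Icc, sub_self, sub_sub_cancel x c, lintegral_Icc_abs_rpow_neg hq hc]

lemma rpow_sub_one_mul_rpow_one_sub_le_one (hq : q ≤ 1) {m c : ℝ} (hc : 0 < c) (hcm : c ≤ m) :
    m ^ (q - 1) * c ^ (1 - q) ≤ 1 := by
  calc m ^ (q - 1) * c ^ (1 - q) ≤ m ^ (q - 1) * m ^ (1 - q) := by
        gcongr
        exact Real.rpow_nonneg (hc.le.trans hcm) _
    _ = 1 := by
        rw [← Real.rpow_add (hc.trans_le hcm), sub_add_sub_cancel', sub_self, Real.rpow_zero]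

lemma setLIntegral_rpow_sub_one_mul_le_of_lintegral_eq (hq : q < 1) {s : Set ℝ}
    (hs : MeasurableSet s) {m c : ℝ} (hc : 0 < c) (hcm : c ≤ m) (hsm : ∀ u ∈ s, m ≤ u)
    {F : ℝ → ℝ} (hF : ∀ u, 0 ≤ F u)
    (hint : ∫⁻ u in s, ENNReal.ofReal (F u) = ENNReal.ofReal (c ^ (1 - q) / (1 - q))) :
    ∫⁻ u in s, ENNReal.ofReal (u ^ (q - 1) * F u) ≤ ENNReal.ofReal (1 / (1 - q)) := by
  have hm : 0 < m := hc.trans_le hcm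
  calc ∫⁻ u in s, ENNReal.ofReal (u ^ (q - 1) * F u)
      ≤ ∫⁻ u in s, ENNReal.ofReal (m ^ (q - 1)) * ENNReal.ofReal (F u) := by
        refine setLIntegral_mono' hs fun u hu => ?_
        rw [← ENNReal.ofReal_mul (Real.rpow_nonneg hm.le _)]
        exact ENNReal.ofReal_le_ofReal <| mul_le_mul_of_nonneg_right
          (Real.rpow_le_rpow_of_nonpos hm (hsm u hu) (by linarith)) (hF u)
    _ = ENNReal.ofReal (m ^ (q - 1) * c ^ (1 - q) * (1 / (1 - q))) := by
        rw [lintegral_const_mul' _ _ ofReal_ne_top, hint,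
          ← ENNReal.ofReal_mul (Real.rpow_nonneg hm.le _), mul_one_div, mul_div_assoc]
    _ ≤ ENNReal.ofReal (1 / (1 - q)) :=
        ENNReal.ofReal_le_ofReal <| mul_le_of_le_one_left (div_nonneg zero_le_one (by linarith))
          (rpow_sub_one_mul_rpow_one_sub_le_one hq.le hc hcm)

lemma lintegral_Ioo_rpow_sub_one_mul_abs_sub_rpow_neg_le (hq : q < 1) (a : ℝ) :
    ∫⁻ u in Ioo (2 * a / 3) (2 * a), ENNReal.ofReal (u ^ (q - 1) * |u - a| ^ (-q)) ≤
      ENNReal.ofReal (2 / (1 - q)) := by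
  rcases le_or_gt a 0 with ha | ha
  · rw [Ioo_eq_empty (by linarith), Measure.restrict_empty, lintegral_zero_measure]
    exact zero_le
  have hcover : Ioo (2 * a / 3) (2 * a) ⊆ Icc (a - a / 3) a ∪ Icc a (a + a) := by
    intro u hu
    rcases le_total u a with h | h
    · exact .inl ⟨by linarith [hu.1], h⟩
    · exact .inr ⟨h, by linarith [hu.2]⟩
  calc _ ≤ ∫⁻ u in Icc (a - a / 3) a ∪ Icc a (a + a),
          ENNReal.ofReal (u ^ (q - 1) * |u - a| ^ (-q)) := lintegral_mono_set hcover
    _ ≤ ENNReal.ofReal (1 / (1 - q)) + ENNReal.ofReal (1 / (1 - q)) := by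
        refine (lintegral_union_le _ _ _).trans (add_le_add ?_ ?_)
        · exact setLIntegral_rpow_sub_one_mul_le_of_lintegral_eq hq measurableSet_Icc
            (by positivity) (by linarith) (fun u hu => hu.1) (fun u => by positivity)
            (lintegral_Icc_sub_abs_sub_rpow_neg hq a (by positivity))
        · exact setLIntegral_rpow_sub_one_mul_le_of_lintegral_eq hq measurableSet_Icc
            ha le_rfl (fun u hu => hu.1) (fun u => by positivity)
            (lintegral_Icc_add_abs_sub_rpow_neg hq a ha.le)
    _ = ENNReal.ofReal (2 / (1 - q)) := by
        rw [← ENNReal.ofReal_add (div_nonneg zero_le_one (by linarith))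
          (div_nonneg zero_le_one (by linarith)), ← add_div, one_add_one_eq_two]

end SingularKernel

lemma lintegral_comp_abs (f : ℝ → ℝ≥0∞) : ∫⁻ x, f |x| = 2 * ∫⁻ x in Ioi 0, f x := by
  have hneg : ∫⁻ x in Iic 0, f |x| = ∫⁻ x in Ici 0, f |x| := by
    simpa using
      (Measure.measurePreserving_neg (volume : Measure ℝ)).setLIntegral_comp_preimage_emb
        (Homeomorph.neg ℝ).measurableEmbedding (fun x => f |x|) (Ici 0)
  have hpos : ∫⁻ x in Ioi 0, f |x| = ∫⁻ x in Ioi 0, f x :=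
    setLIntegral_congr_fun measurableSet_Ioi fun x hx => by rw [abs_of_pos hx]
  rw [← setLIntegral_univ, ← Iic_union_Ioi (a := (0 : ℝ)),
    lintegral_union measurableSet_Ioi (Iic_disjoint_Ioi le_rfl), hneg,
    setLIntegral_congr Ioi_ae_eq_Ici.symm, hpos, two_mul]

lemma lintegral_abs_mul_comp_sq (g : ℝ → ℝ≥0∞) :
    ∫⁻ w, ENNReal.ofReal |w| * g (w ^ 2) = ∫⁻ u in Ioi 0, g u := by
  have himage : (fun w : ℝ => w ^ 2) '' Ioi 0 = Ioi 0 :=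
    ext fun u => ⟨fun ⟨w, hw, hwu⟩ => hwu ▸ pow_pos (mem_Ioi.1 hw) 2,
      fun hu => ⟨√u, Real.sqrt_pos.2 hu, Real.sq_sqrt (le_of_lt hu)⟩⟩
  have hinj : InjOn (fun w : ℝ => w ^ 2) (Ioi 0) :=
    (pow_left_strictMonoOn₀ two_ne_zero).injOn.mono fun w hw => le_of_lt hw
  have hdouble : ∀ w : ℝ, ENNReal.ofReal |2 * w| = 2 * ENNReal.ofReal |w| := fun w => by
    rw [abs_mul, abs_two, ENNReal.ofReal_mul zero_le_two, ENNReal.ofReal_ofNat]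
  calc ∫⁻ w, ENNReal.ofReal |w| * g (w ^ 2)
      = ∫⁻ w, ENNReal.ofReal |w| * g (|w| ^ 2) := by simp only [sq_abs]
    _ = 2 * ∫⁻ w in Ioi 0, ENNReal.ofReal |w| * g (w ^ 2) :=
        by simpa only [abs_abs] using lintegral_comp_abs fun t => ENNReal.ofReal |t| * g (t ^ 2)
    _ = ∫⁻ w in Ioi 0, ENNReal.ofReal |2 * w| * g (w ^ 2) := by
        simp only [hdouble, mul_assoc, lintegral_const_mul' _ _ ofNat_ne_top]
    _ = ∫⁻ u in Ioi 0, g u := by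
        rw [← lintegral_image_eq_lintegral_abs_deriv_mul (f' := (2 * ·)) measurableSet_Ioi
          (fun w _ => by simpa using (hasDerivAt_pow 2 w).hasDerivWithinAt) hinj, himage]

lemma abs_rpow_eq_sq_rpow_half (w p : ℝ) : |w| ^ p = (w ^ 2) ^ (p / 2) := by
  rw [← sq_abs, ← Real.rpow_natCast, ← Real.rpow_mul (abs_nonneg w)]
  ring_nf

section WeightedEstimate

variable {p : ℝ}

lemma abs_rpow_div_abs_sq_sub_rpow_le_two (hp0 : 0 ≤ p) (hp2 : p ≤ 2) {w a : ℝ}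
    (h : w ^ 2 ≤ 2 * |w ^ 2 - a|) : |w| ^ p / |w ^ 2 - a| ^ (p / 2) ≤ 2 := by
  rw [abs_rpow_eq_sq_rpow_half, ← Real.div_rpow (sq_nonneg w) (abs_nonneg _)]
  calc (w ^ 2 / |w ^ 2 - a|) ^ (p / 2) ≤ 2 ^ (p / 2) := by
        gcongr
        exact div_le_of_le_mul₀ (abs_nonneg _) zero_le_two h
    _ ≤ 2 ^ (1 : ℝ) := Real.rpow_le_rpow_of_exponent_le one_le_two (by linarith)
    _ = 2 := Real.rpow_one 2

lemma abs_rpow_div_abs_sq_sub_rpow_mul_eq {w : ℝ} (hw : w ≠ 0) (a y : ℝ) :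
    |w| ^ p / |w ^ 2 - a| ^ (p / 2) * |y| =
      |w| * ((w ^ 2) ^ (p / 2 - 1) * |w ^ 2 - a| ^ (-(p / 2))) * |w * y| := by
  rw [abs_rpow_eq_sq_rpow_half, Real.rpow_sub_one (pow_ne_zero 2 hw),
    Real.rpow_neg (abs_nonneg _), abs_mul, ← sq_abs w]
  field_simp

lemma ofReal_abs_rpow_div_abs_sq_sub_rpow_mul_le (hp0 : 0 ≤ p) (hp2 : p ≤ 2) (a w y : ℝ) :
    ENNReal.ofReal (|w| ^ p / |w ^ 2 - a| ^ (p / 2) * |y|) ≤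
      2 * ENNReal.ofReal |y| + ENNReal.ofReal |w| *
        (Ioo (2 * a / 3) (2 * a)).indicator
          (fun u => ENNReal.ofReal (u ^ (p / 2 - 1) * |u - a| ^ (-(p / 2)))) (w ^ 2) *
        ENNReal.ofReal |w * y| := by
  by_cases hnear : w ^ 2 ∈ Ioo (2 * a / 3) (2 * a)
  · have hw : w ≠ 0 := by
      rintro rfl
      linarith [hnear.1.trans hnear.2, hnear.1]
    rw [indicator_of_mem hnear, abs_rpow_div_abs_sq_sub_rpow_mul_eq hw, ENNReal.ofReal_mul,
      ENNReal.ofReal_mul (abs_nonneg w)]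
    · exact le_add_self
    · exact mul_nonneg (abs_nonneg w) (mul_nonneg (Real.rpow_nonneg (sq_nonneg w) _)
        (Real.rpow_nonneg (abs_nonneg _) _))
  · have hfar : w ^ 2 ≤ 2 * |w ^ 2 - a| := by
      rw [mem_Ioo, not_and_or, not_lt, not_lt] at hnear
      rcases hnear with h | h
      · linarith [neg_abs_le (w ^ 2 - a)]
      · linarith [le_abs_self (w ^ 2 - a)]
    calc ENNReal.ofReal (|w| ^ p / |w ^ 2 - a| ^ (p / 2) * |y|) ≤ ENNReal.ofReal (2 * |y|) :=
          ENNReal.ofReal_le_ofReal <| mul_le_mul_of_nonneg_right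
            (abs_rpow_div_abs_sq_sub_rpow_le_two hp0 hp2 hfar) (abs_nonneg y)
      _ = 2 * ENNReal.ofReal |y| := by rw [ENNReal.ofReal_mul zero_le_two, ENNReal.ofReal_ofNat]
      _ ≤ _ := le_self_add

lemma lintegral_abs_rpow_div_abs_sq_sub_rpow_mul_le (hp0 : 0 ≤ p) (hp2 : p < 2) (a : ℝ)
    {g : ℝ → ℝ} (hg : Measurable g) :
    ∫⁻ w, ENNReal.ofReal (|w| ^ p / |w ^ 2 - a| ^ (p / 2) * |g w|) ≤
      2 * (∫⁻ w, ENNReal.ofReal |g w|) +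
        ENNReal.ofReal (4 / (2 - p)) * ⨆ w, ENNReal.ofReal |w * g w| := by
  set S := ⨆ w, ENNReal.ofReal |w * g w|
  set K := (Ioo (2 * a / 3) (2 * a)).indicator
    (fun u => ENNReal.ofReal (u ^ (p / 2 - 1) * |u - a| ^ (-(p / 2))))
  have hK : Measurable K := Measurable.indicator (by fun_prop) measurableSet_Ioo
  have hkernel : ∫⁻ w, ENNReal.ofReal |w| * K (w ^ 2) ≤ ENNReal.ofReal (4 / (2 - p)) := by
    have h4 : 4 / (2 - p) = 2 / (1 - p / 2) := by field_simp; ring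
    calc ∫⁻ w, ENNReal.ofReal |w| * K (w ^ 2) = ∫⁻ u in Ioi 0, K u := lintegral_abs_mul_comp_sq K
      _ ≤ ∫⁻ u, K u := setLIntegral_le_lintegral _ _
      _ ≤ ENNReal.ofReal (4 / (2 - p)) := by
          rw [lintegral_indicator measurableSet_Ioo, h4]
          exact lintegral_Ioo_rpow_sub_one_mul_abs_sub_rpow_neg_le (by linarith) a
  calc ∫⁻ w, ENNReal.ofReal (|w| ^ p / |w ^ 2 - a| ^ (p / 2) * |g w|)
      ≤ ∫⁻ w, (2 * ENNReal.ofReal |g w| + ENNReal.ofReal |w| * K (w ^ 2) * S) :=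
        lintegral_mono fun w =>
          (ofReal_abs_rpow_div_abs_sq_sub_rpow_mul_le hp0 hp2.le a w (g w)).trans
            (by gcongr; exact le_iSup (fun w => ENNReal.ofReal |w * g w|) w)
    _ = 2 * (∫⁻ w, ENNReal.ofReal |g w|) + (∫⁻ w, ENNReal.ofReal |w| * K (w ^ 2)) * S := by
        rw [lintegral_add_left (by fun_prop), lintegral_const_mul' _ _ ofNat_ne_top,
          lintegral_mul_const'' _ (by fun_prop)]
    _ ≤ _ := by gcongr

end WeightedEstimate

theorem uniform_weighted_estimate_general (rb : ℝ)
    (f : ℝ × ℝ → ℝ) (hf : Measurable f) (p : ℝ) (hp1 : 1 ≤ p) (hp2 : p < 2) :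
    (⨆ ν : ℝ, ⨆ r ∈ Set.Icc (1 : ℝ) rb,
      ∫⁻ L : ℝ, ∫⁻ w : ℝ,
        ENNReal.ofReal
          (|w| ^ p / |w ^ 2 - L ^ 2 * (1 / r ^ 2 - 1 / rb ^ 2) - 2 * ν| ^ (p / 2)
            * |f (w, L)|))
      ≤ 2 * (∫⁻ q : ℝ × ℝ, ENNReal.ofReal |f q|)
        + ENNReal.ofReal (4 / (2 - p))
          * ∫⁻ L : ℝ, ⨆ w : ℝ, ENNReal.ofReal |w * f (w, L)| := by
  refine iSup_le fun ν => iSup₂_le fun r _ => ?_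
  have hslice : ∀ L, Measurable fun w => f (w, L) := fun L => hf.comp (by fun_prop)
  have hmeas : Measurable fun L => ∫⁻ w, ENNReal.ofReal |f (w, L)| :=
    hf.abs.ennreal_ofReal.lintegral_prod_left'
  have htonelli :
      ∫⁻ L, ∫⁻ w, ENNReal.ofReal |f (w, L)| = ∫⁻ q : ℝ × ℝ, ENNReal.ofReal |f q| := by
    rw [Measure.volume_eq_prod, lintegral_prod_symm _ (by fun_prop)]
  calc _ ≤ ∫⁻ L, (2 * (∫⁻ w, ENNReal.ofReal |f (w, L)|) +
          ENNReal.ofReal (4 / (2 - p)) * ⨆ w, ENNReal.ofReal |w * f (w, L)|) :=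
        lintegral_mono fun L => by
          simpa only [sub_sub] using lintegral_abs_rpow_div_abs_sq_sub_rpow_mul_le (by linarith)
            hp2 (L ^ 2 * (1 / r ^ 2 - 1 / rb ^ 2) + 2 * ν) (hslice L)
    _ = _ := by
        rw [lintegral_add_left (hmeas.const_mul 2), lintegral_const_mul' _ _ ofNat_ne_top,
          lintegral_const_mul' _ _ ofReal_ne_top, htonelli]

/-- **Uniform weighted estimate (Lemma on finiteness of `g_i`, `g_e`):**
for measurable `f : ℝ² → ℝ`, `r_b > 1` and `p ∈ [1,2)`,
`sup_{ν∈ℝ} sup_{r∈[1,r_b]} ∫∫ |w|^p |w² − L²(1/r² − 1/r_b²) − 2ν|^{−p/2} |f(w,L)| dw dL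
  ≤ 2‖f‖_{L¹} + (4/(2−p)) ∫ sup_w |w f(w,L)| dL`. -/
theorem uniform_weighted_estimate (rb : ℝ) (hrb : 1 < rb)
    (f : ℝ × ℝ → ℝ) (hf : Measurable f) (p : ℝ) (hp1 : 1 ≤ p) (hp2 : p < 2) :
    (⨆ ν : ℝ, ⨆ r ∈ Set.Icc (1 : ℝ) rb,
      ∫⁻ L : ℝ, ∫⁻ w : ℝ,
        ENNReal.ofReal
          (|w| ^ p / |w ^ 2 - L ^ 2 * (1 / r ^ 2 - 1 / rb ^ 2) - 2 * ν| ^ (p / 2)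
            * |f (w, L)|))
      ≤ 2 * (∫⁻ q : ℝ × ℝ, ENNReal.ofReal |f q|)
        + ENNReal.ofReal (4 / (2 - p))
          * ∫⁻ L : ℝ, ⨆ w : ℝ, ENNReal.ofReal |w * f (w, L)| :=
  uniform_weighted_estimate_general rb f hf p hp1 hp2
end

section
/- Let r_b > 1 and let f : ℝ² → ℝ be measurable with ‖f‖_{L¹(ℝ²)} < ∞ and ∫_ℝ sup_{w∈ℝ} |w f(w,L)| dL < ∞. Define β(ν,r,L) := 2ν + L²(1/r² − 1/r_b²) and Γ(ν,r,w,L) := max(−w,0)/√(w² − β(ν,r,L)) if w² > β(ν,r,L), and Γ(ν,r,w,L) := 0 otherwise. Then sup_{ν∈ℝ} sup_{r∈[1,r_b]} ∫_ℝ ∫_ℝ Γ(ν,r,w,L) |f(w,L)| dw dL ≤ 2 ‖f‖_{L¹(ℝ²)} + 4 ∫_ℝ sup_{w∈ℝ} |w f(w,L)| dL; in particular this supremum is finite. -/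
/-!
The kernel `Γ(ν, r, w, L)` depends on `(ν, r, L)` only through `β = β(ν, r, L)`, so it suffices to
bound `∫ Γ |g| dw` uniformly in `β ∈ ℝ` for a single function `g = f(·, L)`, and then integrate in
`L` (Tonelli). Off `E_β = (-√(2β), -√β)`, wherever `Γ ≠ 0` we have `w² - β ≥ w²/2`, hence `Γ ≤ 2`.
On `E_β`, `Γ |g| = |w g(w)| / √(w² - β) ≤ sup |w g| / √(w² - β)`, and
`∫_{E_β} dw / √(w² - β) ≤ 1`: since `-w > √β` there, the integrand is at most
`(√β)⁻¹ · d/dw (-√(w² - β))`, whose integral over `E_β` is `(√β)⁻¹ · √β`.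
-/

open MeasureTheory ENNReal

noncomputable def betaFn (rb ν r L : ℝ) : ℝ := 2 * ν + L ^ 2 * (1 / r ^ 2 - 1 / rb ^ 2)

noncomputable def GammaFn (rb ν r w L : ℝ) : ℝ :=
  if w ^ 2 > betaFn rb ν r L then max (-w) 0 / Real.sqrt (w ^ 2 - betaFn rb ν r L) else 0

open Set Real

noncomputable def gammaKernel (β w : ℝ) : ℝ :=
  if w ^ 2 > β then max (-w) 0 / √(w ^ 2 - β) else 0

lemma GammaFn_eq_gammaKernel (rb ν r w L : ℝ) :
    GammaFn rb ν r w L = gammaKernel (betaFn rb ν r L) w := rfl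

lemma mem_Ioo_neg_sqrt_iff {β w : ℝ} :
    w ∈ Ioo (-√(2 * β)) (-√β) ↔ w < 0 ∧ β < w ^ 2 ∧ w ^ 2 < 2 * β := by
  rcases lt_or_ge w 0 with hw | hw
  · have hw' : 0 < -w := neg_pos.mpr hw
    rw [mem_Ioo, neg_lt, lt_neg, sqrt_lt' hw', lt_sqrt hw'.le, neg_sq]
    tauto
  · have : ¬ w < -√β := not_lt.mpr ((neg_nonpos.mpr (sqrt_nonneg β)).trans hw)
    simp only [mem_Ioo, this, and_false, false_iff, not_and]
    exact fun h => absurd h (not_lt.mpr hw)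

lemma gammaKernel_le_two {β w : ℝ} (hw : w ∉ Ioo (-√(2 * β)) (-√β)) : gammaKernel β w ≤ 2 := by
  unfold gammaKernel
  split_ifs with hβ
  · rcases le_or_gt 0 w with hw0 | hw0
    · simp [max_eq_right (neg_nonpos.mpr hw0)]
    · have h2β : 2 * β ≤ w ^ 2 := by
        rw [mem_Ioo_neg_sqrt_iff] at hw
        push Not at hw
        exact hw hw0 hβ
      have hsqrt : -w ≤ 2 * √(w ^ 2 - β) := by
        rw [← sqrt_sq (by norm_num : (0 : ℝ) ≤ 2), ← sqrt_mul (by norm_num)]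
        exact le_sqrt_of_sq_le (by nlinarith)
      rwa [max_eq_left (by linarith), div_le_iff₀ (sqrt_pos.mpr (by linarith))]
  · norm_num

lemma gammaKernel_of_mem {β w : ℝ} (hw : w ∈ Ioo (-√(2 * β)) (-√β)) :
    gammaKernel β w = |w| * (√(w ^ 2 - β))⁻¹ := by
  obtain ⟨hw0, hβ, -⟩ := mem_Ioo_neg_sqrt_iff.mp hw
  rw [gammaKernel, if_pos hβ, max_eq_left (by linarith), abs_of_neg hw0, div_eq_mul_inv]

lemma lintegral_Ioo_ofReal_deriv_of_nonneg {g g' : ℝ → ℝ} {a b : ℝ} (hab : a ≤ b)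
    (hcont : ContinuousOn g (Icc a b)) (hderiv : ∀ x ∈ Ioo a b, HasDerivAt g (g' x) x)
    (hpos : ∀ x ∈ Ioo a b, 0 ≤ g' x) :
    ∫⁻ x in Ioo a b, ENNReal.ofReal (g' x) = ENNReal.ofReal (g b - g a) := by
  have hint : IntegrableOn g' (Ioc a b) :=
    intervalIntegral.integrableOn_deriv_of_nonneg hcont hderiv hpos
  rw [← intervalIntegral.integral_eq_sub_of_hasDerivAt_of_le hab hcont hderiv
      (intervalIntegrable_iff_integrableOn_Ioc_of_le hab |>.mpr hint),
    intervalIntegral.integral_of_le hab, integral_Ioc_eq_integral_Ioo,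
    ofReal_integral_eq_lintegral_ofReal (hint.mono_set Ioo_subset_Ioc_self)
      ((ae_restrict_iff' measurableSet_Ioo).mpr (Filter.Eventually.of_forall hpos))]

lemma lintegral_inv_sqrt_sq_sub_le_one (β : ℝ) :
    ∫⁻ w in Ioo (-√(2 * β)) (-√β), ENNReal.ofReal (√(w ^ 2 - β))⁻¹ ≤ 1 := by
  rcases le_or_gt β 0 with hβ | hβ
  · simp [sqrt_eq_zero_of_nonpos hβ, sqrt_eq_zero_of_nonpos (by linarith : 2 * β ≤ 0)]
  have hsβ : 0 < √β := sqrt_pos.mpr hβ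
  have hsq_pos : ∀ w ∈ Ioo (-√(2 * β)) (-√β), 0 < w ^ 2 - β := fun w hw =>
    sub_pos.mpr (mem_Ioo_neg_sqrt_iff.mp hw).2.1
  have hderiv : ∀ w ∈ Ioo (-√(2 * β)) (-√β),
      HasDerivAt (fun w => -√(w ^ 2 - β)) (-w / √(w ^ 2 - β)) w := by
    intro w hw
    refine (((hasDerivAt_pow 2 w).sub_const β).sqrt (hsq_pos w hw).ne').neg.congr_deriv ?_
    field_simp
    ring
  have hderiv_nonneg : ∀ w ∈ Ioo (-√(2 * β)) (-√β), 0 ≤ -w / √(w ^ 2 - β) := fun w hw =>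
    div_nonneg (by linarith [hw.2, sqrt_nonneg β]) (sqrt_nonneg _)
  calc ∫⁻ w in Ioo (-√(2 * β)) (-√β), ENNReal.ofReal (√(w ^ 2 - β))⁻¹
      ≤ ∫⁻ w in Ioo (-√(2 * β)) (-√β),
          ENNReal.ofReal (√β)⁻¹ * ENNReal.ofReal (-w / √(w ^ 2 - β)) := by
        refine setLIntegral_mono' measurableSet_Ioo fun w hw => ?_
        rw [← ENNReal.ofReal_mul (inv_nonneg.mpr hsβ.le)]
        refine ENNReal.ofReal_le_ofReal ?_
        rw [show (√β)⁻¹ * (-w / √(w ^ 2 - β)) = -w / √β * (√(w ^ 2 - β))⁻¹ by ring]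
        exact le_mul_of_one_le_left (inv_nonneg.mpr (sqrt_nonneg _))
          ((one_le_div hsβ).mpr (by linarith [hw.2]))
    _ = ENNReal.ofReal (√β)⁻¹ * ENNReal.ofReal (-√(√β ^ 2 - β) - -√(√(2 * β) ^ 2 - β)) := by
        rw [lintegral_const_mul' _ _ ofReal_ne_top,
          lintegral_Ioo_ofReal_deriv_of_nonneg (by linarith [sqrt_le_sqrt (by linarith : β ≤ 2 * β)])
            (by fun_prop) hderiv hderiv_nonneg, neg_sq, neg_sq]
    _ = 1 := by
        rw [sq_sqrt hβ.le, sq_sqrt (by linarith), ← ENNReal.ofReal_mul (inv_nonneg.mpr hsβ.le)]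
        simp [show 2 * β - β = β by ring, hsβ.ne']

lemma lintegral_gammaKernel_mul_le (β : ℝ) (g : ℝ → ℝ) :
    ∫⁻ w, ENNReal.ofReal (gammaKernel β w * |g w|)
      ≤ 2 * (∫⁻ w, ENNReal.ofReal |g w|) + ⨆ w, ENNReal.ofReal |w * g w| := by
  set E := Ioo (-√(2 * β)) (-√β)
  set S := ⨆ w, ENNReal.ofReal |w * g w|
  have hE : ∫⁻ w in E, ENNReal.ofReal (gammaKernel β w * |g w|) ≤ S :=
    calc ∫⁻ w in E, ENNReal.ofReal (gammaKernel β w * |g w|)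
        ≤ ∫⁻ w in E, S * ENNReal.ofReal (√(w ^ 2 - β))⁻¹ := by
          refine setLIntegral_mono' measurableSet_Ioo fun w hw => ?_
          rw [gammaKernel_of_mem hw, mul_right_comm, ← abs_mul, ENNReal.ofReal_mul (abs_nonneg _)]
          gcongr
          exact le_iSup (fun w => ENNReal.ofReal |w * g w|) w
      _ = S * ∫⁻ w in E, ENNReal.ofReal (√(w ^ 2 - β))⁻¹ :=
          lintegral_const_mul _ (by fun_prop)
      _ ≤ S := mul_le_of_le_one_right' (lintegral_inv_sqrt_sq_sub_le_one β)
  have hEc : ∫⁻ w in Eᶜ, ENNReal.ofReal (gammaKernel β w * |g w|)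
      ≤ 2 * ∫⁻ w, ENNReal.ofReal |g w| :=
    calc ∫⁻ w in Eᶜ, ENNReal.ofReal (gammaKernel β w * |g w|)
        ≤ ∫⁻ w in Eᶜ, 2 * ENNReal.ofReal |g w| := by
          refine setLIntegral_mono' measurableSet_Ioo.compl fun w hw => ?_
          rw [← ENNReal.ofReal_ofNat 2, ← ENNReal.ofReal_mul zero_le_two]
          exact ENNReal.ofReal_le_ofReal
            (mul_le_mul_of_nonneg_right (gammaKernel_le_two hw) (abs_nonneg _))
      _ ≤ ∫⁻ w, 2 * ENNReal.ofReal |g w| := setLIntegral_le_lintegral _ _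
      _ = 2 * ∫⁻ w, ENNReal.ofReal |g w| := lintegral_const_mul' _ _ ofNat_ne_top
  rw [← lintegral_add_compl _ (measurableSet_Ioo : MeasurableSet E), add_comm]
  exact add_le_add hEc hE

theorem gamma_uniform_bound_general (rb : ℝ)
    (f : ℝ × ℝ → ℝ) (hf : Measurable f)
    (hL1 : (∫⁻ q : ℝ × ℝ, ENNReal.ofReal |f q|) ≠ ⊤)
    (hN2 : (∫⁻ L : ℝ, ⨆ w : ℝ, ENNReal.ofReal |w * f (w, L)|) ≠ ⊤) :
    ((⨆ ν : ℝ, ⨆ r ∈ Set.Icc (1 : ℝ) rb,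
        ∫⁻ L : ℝ, ∫⁻ w : ℝ, ENNReal.ofReal (GammaFn rb ν r w L * |f (w, L)|))
      ≤ 2 * (∫⁻ q : ℝ × ℝ, ENNReal.ofReal |f q|)
        + 4 * ∫⁻ L : ℝ, ⨆ w : ℝ, ENNReal.ofReal |w * f (w, L)|) ∧
    (⨆ ν : ℝ, ⨆ r ∈ Set.Icc (1 : ℝ) rb,
        ∫⁻ L : ℝ, ∫⁻ w : ℝ, ENNReal.ofReal (GammaFn rb ν r w L * |f (w, L)|)) < ⊤ := by
  set I := ∫⁻ q : ℝ × ℝ, ENNReal.ofReal |f q|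
  set J := ∫⁻ L : ℝ, ⨆ w : ℝ, ENNReal.ofReal |w * f (w, L)|
  have hI : ∫⁻ L, ∫⁻ w, ENNReal.ofReal |f (w, L)| = I :=
    (lintegral_prod_symm' (fun q => ENNReal.ofReal |f q|) (by fun_prop)).symm
  have hbound : ∀ ν r, ∫⁻ L, ∫⁻ w, ENNReal.ofReal (GammaFn rb ν r w L * |f (w, L)|) ≤ 2 * I + J :=
    fun ν r => calc
      _ ≤ ∫⁻ L, (2 * (∫⁻ w, ENNReal.ofReal |f (w, L)|) + ⨆ w, ENNReal.ofReal |w * f (w, L)|) :=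
          lintegral_mono fun L => by
            simpa only [GammaFn_eq_gammaKernel] using
              lintegral_gammaKernel_mul_le (betaFn rb ν r L) (fun w => f (w, L))
      _ = 2 * I + J := by
          rw [lintegral_add_left (by fun_prop), lintegral_const_mul _ (by fun_prop), hI]
  have hsup : (⨆ ν : ℝ, ⨆ r ∈ Set.Icc (1 : ℝ) rb,
      ∫⁻ L, ∫⁻ w, ENNReal.ofReal (GammaFn rb ν r w L * |f (w, L)|)) ≤ 2 * I + 4 * J :=
    iSup_le fun ν => iSup₂_le fun r _ =>
      (hbound ν r).trans (by gcongr; exact le_mul_of_one_le_left' (by norm_num))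
  exact ⟨hsup, hsup.trans_lt (by finiteness)⟩

/-- **Uniform bound for the kernel `Γ`:** if `f : ℝ² → ℝ` is measurable with
`‖f‖_{L¹} < ∞` and `∫ sup_w |w f(w,L)| dL < ∞`, then
`sup_{ν∈ℝ} sup_{r∈[1,r_b]} ∫∫ Γ(ν,r,w,L) |f(w,L)| dw dL
  ≤ 2‖f‖_{L¹} + 4 ∫ sup_w |w f(w,L)| dL`, and in particular that supremum is finite. -/
theorem gamma_uniform_bound (rb : ℝ) (hrb : 1 < rb)
    (f : ℝ × ℝ → ℝ) (hf : Measurable f)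
    (hL1 : (∫⁻ q : ℝ × ℝ, ENNReal.ofReal |f q|) ≠ ⊤)
    (hN2 : (∫⁻ L : ℝ, ⨆ w : ℝ, ENNReal.ofReal |w * f (w, L)|) ≠ ⊤) :
    ((⨆ ν : ℝ, ⨆ r ∈ Set.Icc (1 : ℝ) rb,
        ∫⁻ L : ℝ, ∫⁻ w : ℝ, ENNReal.ofReal (GammaFn rb ν r w L * |f (w, L)|))
      ≤ 2 * (∫⁻ q : ℝ × ℝ, ENNReal.ofReal |f q|)
        + 4 * ∫⁻ L : ℝ, ⨆ w : ℝ, ENNReal.ofReal |w * f (w, L)|) ∧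
    (⨆ ν : ℝ, ⨆ r ∈ Set.Icc (1 : ℝ) rb,
        ∫⁻ L : ℝ, ∫⁻ w : ℝ, ENNReal.ofReal (GammaFn rb ν r w L * |f (w, L)|)) < ⊤ :=
  gamma_uniform_bound_general rb f hf hL1 hN2
end

section
/- Let r_b > 1 and let (φ_n) be a sequence of continuous functions on [1,r_b] converging uniformly to a continuous function φ. Define, for a continuous function ψ on [1,r_b], ρ̃[ψ](e) := inf{ a ∈ [1,r_b] : ψ(s) ≤ e for all s ∈ [a,r_b] }. Then for almost every e ∈ ℝ (with respect to Lebesgue measure), ρ̃[φ_n](e) → ρ̃[φ](e) as n → ∞. -/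
/-!
Uniform closeness `|φₙ - φ| < δ` on `[1, r_b]` squeezes `ρ̃[φₙ](e)` between `ρ̃[φ](e + δ)` and
`ρ̃[φ](e - δ)` as soon as `φ(r_b) < e - δ`. Since `e ↦ ρ̃[φ](e)` is antitone on `[φ(r_b), ∞)`, it is
continuous off a countable set, and at every continuity point `e > φ(r_b)` the squeeze gives
convergence. For `e < φ(r_b)` all the defining sets are eventually empty, so every value is the
junk value `sInf ∅ = 0`.
-/

/-- `ρ̃[ψ](e) := inf { a ∈ [1, r_b] : ψ(s) ≤ e for all s ∈ [a, r_b] }`. -/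
noncomputable def rhoTilde (rb : ℝ) (ψ : ℝ → ℝ) (e : ℝ) : ℝ :=
  sInf {a | a ∈ Set.Icc 1 rb ∧ ∀ s ∈ Set.Icc a rb, ψ s ≤ e}

open Filter Set Topology

section RhoTilde

variable {rb : ℝ} {ψ χ : ℝ → ℝ} {e e' : ℝ}

theorem rhoTilde_le_rhoTilde (hrb : 1 ≤ rb) (hχ : χ rb ≤ e')
    (h : ∀ s ∈ Icc 1 rb, ψ s - e ≤ χ s - e') : rhoTilde rb ψ e ≤ rhoTilde rb χ e' := by
  refine csInf_le_csInf ⟨1, fun a ha => ha.1.1⟩ ⟨rb, ⟨hrb, le_rfl⟩, fun s hs => ?_⟩ ?_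
  · rwa [le_antisymm hs.2 hs.1]
  · rintro a ⟨ha, hle⟩
    refine ⟨ha, fun s hs => ?_⟩
    linarith [hle s hs, h s ⟨ha.1.trans hs.1, hs.2⟩]

theorem rhoTilde_eq_zero_of_lt (h : e < ψ rb) : rhoTilde rb ψ e = 0 := by
  rw [rhoTilde, ← Real.sInf_empty]
  congr
  refine eq_empty_iff_forall_notMem.2 ?_
  rintro a ⟨ha, hle⟩
  exact (hle rb ⟨ha.2, le_rfl⟩).not_gt h

theorem antitone_rhoTilde_max (hrb : 1 ≤ rb) :
    Antitone fun e => rhoTilde rb ψ (max e (ψ rb)) := fun e e' hee' =>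
  rhoTilde_le_rhoTilde hrb (le_max_right _ _) fun _ _ => by
    linarith [max_le_max_right (ψ rb) hee']

theorem countable_not_continuousAt_rhoTilde (hrb : 1 ≤ rb) :
    {e | ψ rb < e ∧ ¬ContinuousAt (rhoTilde rb ψ) e}.Countable := by
  refine (antitone_rhoTilde_max (ψ := ψ) hrb).countable_not_continuousAt.mono ?_
  rintro e ⟨hlt, hdisc⟩ hcont
  refine hdisc (hcont.congr ?_)
  filter_upwards [lt_mem_nhds hlt] with x hx
  rw [max_eq_left hx.le]

end RhoTilde

section Convergence

variable {ι : Type*} {l : Filter ι} {rb : ℝ} {φn : ι → ℝ → ℝ} {φ : ℝ → ℝ} {e : ℝ}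

theorem tendsto_rhoTilde_of_lt (hconv : TendstoUniformlyOn φn φ l (Icc 1 rb)) (hrb : 1 ≤ rb)
    (he : e < φ rb) : Tendsto (fun n => rhoTilde rb (φn n) e) l (𝓝 (rhoTilde rb φ e)) := by
  rw [rhoTilde_eq_zero_of_lt he]
  refine tendsto_const_nhds.congr' ?_
  filter_upwards [Metric.tendstoUniformlyOn_iff.1 hconv _ (sub_pos.2 he)] with n hn
  have hclose := hn rb ⟨hrb, le_rfl⟩
  rw [Real.dist_eq, abs_lt] at hclose
  exact (rhoTilde_eq_zero_of_lt (by linarith)).symm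

theorem tendsto_rhoTilde_of_continuousAt (hconv : TendstoUniformlyOn φn φ l (Icc 1 rb))
    (hrb : 1 ≤ rb) (he : φ rb < e) (hcont : ContinuousAt (rhoTilde rb φ) e) :
    Tendsto (fun n => rhoTilde rb (φn n) e) l (𝓝 (rhoTilde rb φ e)) := by
  rw [Metric.tendsto_nhds]
  intro ε hε
  obtain ⟨δ₀, hδ₀, hnear⟩ := Metric.continuousAt_iff.1 hcont ε hε
  set δ := min (δ₀ / 2) ((e - φ rb) / 2)
  have hδ : 0 < δ := lt_min (by linarith) (by linarith)
  have hδδ₀ : δ < δ₀ := (min_le_left _ _).trans_lt (by linarith)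
  have hδe : δ ≤ (e - φ rb) / 2 := min_le_right _ _
  filter_upwards [Metric.tendstoUniformlyOn_iff.1 hconv δ hδ] with n hn
  have hclose : ∀ s ∈ Icc 1 rb, |φ s - φn n s| < δ := fun s hs => hn s hs
  have hupper : rhoTilde rb (φn n) e ≤ rhoTilde rb φ (e - δ) :=
    rhoTilde_le_rhoTilde hrb (by linarith) fun s hs => by linarith [(abs_lt.1 (hclose s hs)).1]
  have hlower : rhoTilde rb φ (e + δ) ≤ rhoTilde rb (φn n) e := by
    refine rhoTilde_le_rhoTilde hrb ?_ fun s hs => by linarith [(abs_lt.1 (hclose s hs)).2]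
    linarith [(abs_lt.1 (hclose rb ⟨hrb, le_rfl⟩)).1]
  have h₁ := hnear (x := e - δ) (by rw [Real.dist_eq, abs_lt]; constructor <;> linarith)
  have h₂ := hnear (x := e + δ) (by rw [Real.dist_eq, abs_lt]; constructor <;> linarith)
  rw [Real.dist_eq, abs_lt] at h₁ h₂ ⊢
  constructor <;> linarith

end Convergence

theorem rhoTilde_tendsto_general (rb : ℝ) (hrb : 1 < rb) (φn : ℕ → ℝ → ℝ) (φ : ℝ → ℝ)
    (hconv : TendstoUniformlyOn φn φ Filter.atTop (Set.Icc 1 rb)) :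
    ∀ᵐ e : ℝ ∂MeasureTheory.volume,
      Filter.Tendsto (fun n => rhoTilde rb (φn n) e) Filter.atTop
        (nhds (rhoTilde rb φ e)) := by
  have hbad := (countable_singleton (φ rb)).union
    (countable_not_continuousAt_rhoTilde (ψ := φ) hrb.le)
  filter_upwards [hbad.ae_notMem MeasureTheory.volume] with e he
  simp only [mem_union, mem_singleton_iff, mem_ofPred_eq, not_or, not_and_not_right] at he
  obtain ⟨hne, hcont⟩ := he
  rcases lt_or_gt_of_ne hne with hlt | hgt
  · exact tendsto_rhoTilde_of_lt hconv hrb.le hlt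
  · exact tendsto_rhoTilde_of_continuousAt hconv hrb.le hgt (hcont hgt)

/-- **Convergence property for `ρ̃`:** if continuous functions `φ_n` converge uniformly on
`[1, r_b]` to a continuous `φ`, then `ρ̃[φ_n](e) → ρ̃[φ](e)` for almost every `e ∈ ℝ`. -/
theorem rhoTilde_tendsto (rb : ℝ) (hrb : 1 < rb) (φn : ℕ → ℝ → ℝ) (φ : ℝ → ℝ)
    (hcont : ∀ n, ContinuousOn (φn n) (Set.Icc 1 rb))
    (hφ : ContinuousOn φ (Set.Icc 1 rb))
    (hconv : TendstoUniformlyOn φn φ Filter.atTop (Set.Icc 1 rb)) :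
    ∀ᵐ e : ℝ ∂MeasureTheory.volume,
      Filter.Tendsto (fun n => rhoTilde rb (φn n) e) Filter.atTop
        (nhds (rhoTilde rb φ e)) :=
  rhoTilde_tendsto_general rb hrb φn φ hconv
end

section
/- Let r_b > 1, p ∈ [1,∞], and let φ : [1,r_b] → ℝ be absolutely continuous with weak derivative φ' ∈ L^p(1,r_b). Define φ†(r) := max_{r' ∈ [r, r_b]} φ(r'). Then φ† is absolutely continuous with weak derivative in L^p(1,r_b); more precisely, for every ψ ∈ C¹_c(1,r_b), ∫_1^{r_b} φ†(x) ψ'(x) dx = − ∫_1^{r_b} 1_{{φ†(x) = φ(x)}} φ'(x) ψ(x) dx, so that (φ†)' = 1_{{φ† = φ}} φ' almost everywhere, and consequently ‖(φ†)'‖_{L^p(1,r_b)} ≤ ‖φ'‖_{L^p(1,r_b)}. -/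
open MeasureTheory

/-- `φ†(r) := max_{r' ∈ [r, r_b]} φ(r')`, the smallest non-increasing function dominating `φ`. -/
noncomputable def dag (rb : ℝ) (φ : ℝ → ℝ) (r : ℝ) : ℝ :=
  sSup (φ '' Set.Icc r rb)

/-!
Near a point where `φ < φ†`, the envelope `φ†` is constant; at a point of `{φ† = φ}` where both
are differentiable, `φ† - φ ≥ 0` has a local minimum, so `(φ†)' = φ'` there. Since
`0 ≤ φ†(x) - φ†(y) ≤ ∫_x^y |φ'|` for `x ≤ y`, the envelope is absolutely continuous, and the
fundamental theorem of calculus and integration by parts for absolutely continuous functions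
turn `(φ†)' = 1_{φ† = φ} φ'` a.e. into the representation formula and the weak-derivative
identity. The `L^p` bound is the pointwise bound `|1_E φ'| ≤ |φ'|`.
-/

open Set Filter Topology intervalIntegral

theorem AbsolutelyContinuousOnInterval.of_dist_le {X Y : Type*} [PseudoMetricSpace X]
    [PseudoMetricSpace Y] {f : ℝ → X} {F : ℝ → Y} {a b : ℝ}
    (hF : AbsolutelyContinuousOnInterval F a b)
    (h : ∀ x ∈ uIcc a b, ∀ y ∈ uIcc a b, dist (f x) (f y) ≤ dist (F x) (F y)) :
    AbsolutelyContinuousOnInterval f a b := by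
  refine squeeze_zero' (Eventually.of_forall fun E ↦ Finset.sum_nonneg fun _ _ ↦ dist_nonneg)
    ?_ hF
  filter_upwards [mem_inf_of_right (mem_principal_self _)] with E hE
  exact Finset.sum_le_sum fun i hi ↦ h _ (hE.1 i hi).1 _ (hE.1 i hi).2

section dag

variable {a b : ℝ} {f : ℝ → ℝ}

theorem exists_dag_eq_max (hf : ContinuousOn f (Icc a b)) {x y : ℝ} (hax : a ≤ x)
    (hxy : x ≤ y) (hyb : y ≤ b) : ∃ z ∈ Icc x y, dag b f x = max (f z) (dag b f y) := by
  have hcpt : ∀ {u v}, a ≤ u → v ≤ b → IsCompact (f '' Icc u v) := fun hau hvb ↦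
    isCompact_Icc.image_of_continuousOn (hf.mono (Icc_subset_Icc hau hvb))
  obtain ⟨z, hz, hfz⟩ := (hcpt hax hyb).sSup_mem ((nonempty_Icc.2 hxy).image f)
  refine ⟨z, hz, ?_⟩
  rw [dag, dag, ← Icc_union_Icc_eq_Icc hxy hyb, image_union, hfz,
    csSup_union (hcpt hax hyb).bddAbove ((nonempty_Icc.2 hxy).image f)
      (hcpt (hax.trans hxy) le_rfl).bddAbove ((nonempty_Icc.2 hyb).image f)]

theorem le_dag (hf : ContinuousOn f (Icc a b)) {x t : ℝ} (hax : a ≤ x) (ht : t ∈ Icc x b) :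
    f t ≤ dag b f x :=
  le_csSup (isCompact_Icc.image_of_continuousOn (hf.mono (Icc_subset_Icc hax le_rfl))).bddAbove
    (mem_image_of_mem f ht)

theorem dag_antitoneOn (hf : ContinuousOn f (Icc a b)) : AntitoneOn (dag b f) (Icc a b) := by
  intro x hx y hy hxy
  obtain ⟨z, -, hz⟩ := exists_dag_eq_max hf hx.1 hxy hy.2
  exact hz ▸ le_max_right _ _

theorem dag_sub_dag_le (hf : ContinuousOn f (Icc a b)) {x y C : ℝ} (hax : a ≤ x)
    (hxy : x ≤ y) (hyb : y ≤ b) (hC₀ : 0 ≤ C) (hC : ∀ z ∈ Icc x y, f z - f y ≤ C) :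
    dag b f x - dag b f y ≤ C := by
  obtain ⟨z, hz, hdag⟩ := exists_dag_eq_max hf hax hxy hyb
  have hfy : f y ≤ dag b f y := le_dag hf (hax.trans hxy) ⟨le_rfl, hyb⟩
  rw [hdag, sub_le_iff_le_add]
  exact max_le (by linarith [hC z hz]) (by linarith)

theorem dag_eventuallyEq_of_lt (hf : ContinuousOn f (Icc a b)) {t : ℝ} (ht : t ∈ Ioo a b)
    (hlt : f t < dag b f t) : dag b f =ᶠ[𝓝 t] fun _ ↦ dag b f t := by
  have hnhds : ∀ᶠ s in 𝓝 t, s ∈ Ioo a b ∧ f s < dag b f t :=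
    Filter.Eventually.and (Ioo_mem_nhds ht.1 ht.2)
      ((hf.continuousAt (Icc_mem_nhds ht.1 ht.2)).eventually (gt_mem_nhds hlt))
  obtain ⟨l, u, hlu, hsub⟩ := mem_nhds_iff_exists_Ioo_subset.1 hnhds
  filter_upwards [Ioo_mem_nhds hlu.1 hlu.2] with s hs
  have hbetween : ∀ z, min s t ≤ z → z ≤ max s t → f z < dag b f t := fun z h₁ h₂ ↦
    (hsub ⟨(lt_min hs.1 hlu.1).trans_le h₁, h₂.trans_lt (max_lt hs.2 hlu.2)⟩).2
  rcases le_total s t with hst | hts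
  · obtain ⟨z, hz, hdag⟩ := exists_dag_eq_max hf (hsub hs).1.1.le hst ht.2.le
    rw [hdag, max_eq_right (hbetween z (by simp [hz.1]) (by simp [hz.2])).le]
  · obtain ⟨z, hz, hdag⟩ := exists_dag_eq_max hf ht.1.le hts (hsub hs).1.2.le
    have hfz := hbetween z (by simp [hz.1]) (by simp [hz.2])
    rw [hdag] at hfz ⊢
    exact (max_eq_right ((lt_max_iff.1 hfz).resolve_left (lt_irrefl _)).le).symm

theorem deriv_dag_eq_of_dag_eq (hf : ContinuousOn f (Icc a b)) {t f' : ℝ}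
    (ht : t ∈ Ioo a b) (heq : dag b f t = f t) (hf' : HasDerivAt f f' t)
    (hd : DifferentiableAt ℝ (dag b f) t) : deriv (dag b f) t = f' := by
  have hmin : IsLocalMin (fun s ↦ dag b f s - f s) t := by
    filter_upwards [Ioo_mem_nhds ht.1 ht.2] with s hs
    rw [heq, sub_self, sub_nonneg]
    exact le_dag hf hs.1.le ⟨le_rfl, hs.2.le⟩
  exact sub_eq_zero.1 (hmin.hasDerivAt_eq_zero (hd.hasDerivAt.sub hf'))

end dag

section sobolev

variable {a b : ℝ} {φ φ' : ℝ → ℝ}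

theorem sub_eq_integral_of_eq_add_integral (hφ' : IntervalIntegrable φ' volume a b)
    (hφ : ∀ x ∈ Icc a b, φ x = φ a + ∫ t in a..x, φ' t) {x y : ℝ} (hx : x ∈ Icc a b)
    (hy : y ∈ Icc a b) : φ y - φ x = ∫ t in x..y, φ' t := by
  have hsub : ∀ {z}, z ∈ Icc a b → IntervalIntegrable φ' volume a z := fun hz ↦
    hφ'.mono_set (uIcc_subset_uIcc left_mem_uIcc (Icc_subset_uIcc hz))
  rw [hφ y hy, hφ x hx, add_sub_add_left_eq_sub, integral_interval_sub_left (hsub hy) (hsub hx)]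

theorem continuousOn_of_eq_add_integral (hab : a ≤ b) (hφ' : IntervalIntegrable φ' volume a b)
    (hφ : ∀ x ∈ Icc a b, φ x = φ a + ∫ t in a..x, φ' t) : ContinuousOn φ (Icc a b) := by
  have hprim := (hφ'.absolutelyContinuousOnInterval_intervalIntegral left_mem_uIcc).continuousOn
  rw [uIcc_of_le hab] at hprim
  exact (continuousOn_const.add hprim).congr hφ

theorem dag_sub_dag_le_integral_abs (hc : ContinuousOn φ (Icc a b))
    (hφ' : IntervalIntegrable φ' volume a b)
    (hφ : ∀ x ∈ Icc a b, φ x = φ a + ∫ t in a..x, φ' t) {x y : ℝ} (hx : x ∈ Icc a b)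
    (hy : y ∈ Icc a b) (hxy : x ≤ y) :
    dag b φ x - dag b φ y ≤ ∫ t in x..y, |φ' t| := by
  refine dag_sub_dag_le hc hx.1 hxy hy.2 (integral_nonneg hxy fun _ _ ↦ abs_nonneg _)
    fun z hz ↦ ?_
  have hzab : z ∈ Icc a b := ⟨hx.1.trans hz.1, hz.2.trans hy.2⟩
  calc φ z - φ y = -∫ t in z..y, φ' t := by
        rw [← sub_eq_integral_of_eq_add_integral hφ' hφ hzab hy]; ring
    _ ≤ ∫ t in z..y, |φ' t| := (neg_le_abs _).trans (abs_integral_le_integral_abs hz.2)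
    _ ≤ ∫ t in x..y, |φ' t| :=
        integral_mono_interval hz.1 hz.2 le_rfl (ae_of_all _ fun _ ↦ abs_nonneg _)
          (hφ'.abs.mono_set (uIcc_subset_uIcc (Icc_subset_uIcc hx) (Icc_subset_uIcc hy)))

theorem absolutelyContinuousOnInterval_dag (hab : a ≤ b)
    (hφ' : IntervalIntegrable φ' volume a b)
    (hφ : ∀ x ∈ Icc a b, φ x = φ a + ∫ t in a..x, φ' t) :
    AbsolutelyContinuousOnInterval (dag b φ) a b := by
  have hc := continuousOn_of_eq_add_integral hab hφ' hφ
  have hint : ∀ {z}, z ∈ Icc a b → IntervalIntegrable (fun t ↦ |φ' t|) volume a z := fun hz ↦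
    hφ'.abs.mono_set (uIcc_subset_uIcc left_mem_uIcc (Icc_subset_uIcc hz))
  refine (hφ'.abs.absolutelyContinuousOnInterval_intervalIntegral left_mem_uIcc).of_dist_le ?_
  rw [uIcc_of_le hab]
  intro x hx y hy
  wlog hxy : x ≤ y generalizing x y
  · rw [dist_comm, dist_comm (∫ t in a..x, |φ' t|)]
    exact this y hy x hx (le_of_not_ge hxy)
  rw [Real.dist_eq, abs_of_nonneg (sub_nonneg.2 (dag_antitoneOn hc hx hy hxy)), dist_comm,
    Real.dist_eq, integral_interval_sub_left (hint hy) (hint hx),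
    abs_of_nonneg (integral_nonneg hxy fun _ _ ↦ abs_nonneg _)]
  exact dag_sub_dag_le_integral_abs hc hφ' hφ hx hy hxy

theorem ae_hasDerivAt_of_eq_add_integral (hφ' : IntervalIntegrable φ' volume a b)
    (hφ : ∀ x ∈ Icc a b, φ x = φ a + ∫ t in a..x, φ' t) :
    ∀ᵐ x, x ∈ Ioo a b → HasDerivAt φ (φ' x) x := by
  filter_upwards [hφ'.ae_hasDerivAt_integral] with x hx hxab
  refine ((hx (Icc_subset_uIcc (Ioo_subset_Icc_self hxab)) a left_mem_uIcc).const_add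
    (φ a)).congr_of_eventuallyEq ?_
  filter_upwards [Ioo_mem_nhds hxab.1 hxab.2] with y hy using hφ y (Ioo_subset_Icc_self hy)

theorem ae_deriv_dag (hab : a ≤ b) (hφ' : IntervalIntegrable φ' volume a b)
    (hφ : ∀ x ∈ Icc a b, φ x = φ a + ∫ t in a..x, φ' t) :
    ∀ᵐ x, x ∈ Ioc a b → deriv (dag b φ) x = {y | dag b φ y = φ y}.indicator φ' x := by
  have hc := continuousOn_of_eq_add_integral hab hφ' hφ
  filter_upwards [(absolutelyContinuousOnInterval_dag hab hφ' hφ).ae_differentiableAt,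
    ae_hasDerivAt_of_eq_add_integral hφ' hφ, Ioo_ae_eq_Ioc (μ := volume) (a := a) (b := b)]
    with x hd hφx hIoo hxIoc
  have hx : x ∈ Ioo a b := hIoo.mpr hxIoc
  by_cases hE : dag b φ x = φ x
  · rw [indicator_of_mem (show x ∈ {y | dag b φ y = φ y} from hE)]
    exact deriv_dag_eq_of_dag_eq hc hx hE (hφx hx)
      (hd (uIcc_of_le hab ▸ Ioo_subset_Icc_self hx))
  · have hlt : φ x < dag b φ x := (le_dag hc hx.1.le ⟨le_rfl, hx.2.le⟩).lt_of_ne (Ne.symm hE)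
    rw [indicator_of_notMem (show x ∉ {y | dag b φ y = φ y} from hE),
      (dag_eventuallyEq_of_lt hc hx hlt).deriv_eq, deriv_const]

theorem dag_eq_add_integral (hab : a ≤ b) (hφ' : IntervalIntegrable φ' volume a b)
    (hφ : ∀ x ∈ Icc a b, φ x = φ a + ∫ t in a..x, φ' t) {x : ℝ} (hx : x ∈ Icc a b) :
    dag b φ x = dag b φ a + ∫ t in a..x, {y | dag b φ y = φ y}.indicator φ' t := by
  have hac := (absolutelyContinuousOnInterval_dag hab hφ' hφ).mono
    (uIcc_subset_uIcc left_mem_uIcc (Icc_subset_uIcc hx))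
  rw [← intervalIntegral.integral_congr_ae ?_, hac.integral_deriv_eq_sub, add_sub_cancel]
  filter_upwards [ae_deriv_dag hab hφ' hφ] with t ht htx
  rw [uIoc_of_le hx.1] at htx
  exact ht ⟨htx.1, htx.2.trans hx.2⟩

theorem integral_dag_mul_deriv (hab : a ≤ b) (hφ' : IntervalIntegrable φ' volume a b)
    (hφ : ∀ x ∈ Icc a b, φ x = φ a + ∫ t in a..x, φ' t) {ψ : ℝ → ℝ} (hψ : ContDiff ℝ 1 ψ)
    (hψa : ψ a = 0) (hψb : ψ b = 0) :
    ∫ x in a..b, dag b φ x * deriv ψ x =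
      -∫ x in a..b, {y | dag b φ y = φ y}.indicator φ' x * ψ x := by
  rw [(absolutelyContinuousOnInterval_dag hab hφ' hφ).integral_mul_deriv_eq_deriv_mul
    hψ.contDiffOn.absolutelyContinuousOnInterval, hψa, hψb, mul_zero, mul_zero, sub_zero,
    zero_sub]
  congr 1
  refine intervalIntegral.integral_congr_ae ?_
  filter_upwards [ae_deriv_dag hab hφ' hφ] with x hx hxab
  rw [hx (uIoc_of_le hab ▸ hxab)]

end sobolev

theorem dag_sobolev_general (rb : ℝ) (hrb : 1 < rb) (p : ENNReal) (φ φ' : ℝ → ℝ)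
    (hInt : IntegrableOn φ' (Set.Ioo 1 rb))
    (hAC : ∀ x ∈ Set.Icc 1 rb, φ x = φ 1 + ∫ t in Set.Ioc 1 x, φ' t) :
    (∀ x ∈ Set.Icc 1 rb,
      dag rb φ x = dag rb φ 1 +
        ∫ t in Set.Ioc 1 x, Set.indicator {y | dag rb φ y = φ y} φ' t) ∧
    (∀ ψ : ℝ → ℝ, ContDiff ℝ 1 ψ → HasCompactSupport ψ →
      Function.support ψ ⊆ Set.Ioo 1 rb →
      ∫ x in Set.Ioo 1 rb, dag rb φ x * deriv ψ x
        = - ∫ x in Set.Ioo 1 rb, Set.indicator {y | dag rb φ y = φ y} φ' x * ψ x) ∧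
    eLpNorm (Set.indicator {y | dag rb φ y = φ y} φ') p (volume.restrict (Set.Ioo 1 rb))
      ≤ eLpNorm φ' p (volume.restrict (Set.Ioo 1 rb)) := by
  have hφ' : IntervalIntegrable φ' volume 1 rb :=
    (intervalIntegrable_iff_integrableOn_Ioo_of_le hrb.le).2 hInt
  have hφ : ∀ x ∈ Icc 1 rb, φ x = φ 1 + ∫ t in 1..x, φ' t := fun x hx ↦ by
    rw [integral_of_le hx.1]; exact hAC x hx
  refine ⟨fun x hx ↦ ?_, fun ψ hψ _ hsupp ↦ ?_, eLpNorm_indicator_le φ'⟩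
  · rw [← integral_of_le hx.1]
    exact dag_eq_add_integral hrb.le hφ' hφ hx
  · have hψ := integral_dag_mul_deriv hrb.le hφ' hφ hψ
      (Function.notMem_support.1 fun h ↦ (hsupp h).1.false)
      (Function.notMem_support.1 fun h ↦ (hsupp h).2.false)
    rwa [integral_of_le hrb.le, integral_of_le hrb.le, integral_Ioc_eq_integral_Ioo,
      integral_Ioc_eq_integral_Ioo] at hψ

/-- **The envelope preserves `W^{1,p}` regularity:** if `φ` is absolutely continuous on
`[1, r_b]` with weak derivative `φ' ∈ L^p(1, r_b)` (`1 ≤ p ≤ ∞`), then `φ†` is absolutely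
continuous with weak derivative `(φ†)' = 1_{{φ† = φ}} φ'`: it satisfies the integration by
parts identity against every `ψ ∈ C¹_c(1, r_b)`, and `‖(φ†)'‖_{L^p} ≤ ‖φ'‖_{L^p}`. -/
theorem dag_sobolev (rb : ℝ) (hrb : 1 < rb) (p : ENNReal) (hp : 1 ≤ p)
    (φ φ' : ℝ → ℝ) (hmeas : Measurable φ')
    (hInt : IntegrableOn φ' (Set.Ioo 1 rb))
    (hAC : ∀ x ∈ Set.Icc 1 rb, φ x = φ 1 + ∫ t in Set.Ioc 1 x, φ' t)
    (hLp : MemLp φ' p (volume.restrict (Set.Ioo 1 rb))) :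
    (∀ x ∈ Set.Icc 1 rb,
      dag rb φ x = dag rb φ 1 +
        ∫ t in Set.Ioc 1 x, Set.indicator {y | dag rb φ y = φ y} φ' t) ∧
    (∀ ψ : ℝ → ℝ, ContDiff ℝ 1 ψ → HasCompactSupport ψ →
      Function.support ψ ⊆ Set.Ioo 1 rb →
      ∫ x in Set.Ioo 1 rb, dag rb φ x * deriv ψ x
        = - ∫ x in Set.Ioo 1 rb, Set.indicator {y | dag rb φ y = φ y} φ' x * ψ x) ∧
    eLpNorm (Set.indicator {y | dag rb φ y = φ y} φ') p (volume.restrict (Set.Ioo 1 rb))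
      ≤ eLpNorm φ' p (volume.restrict (Set.Ioo 1 rb)) :=
  dag_sobolev_general rb hrb p φ φ' hInt hAC
end

section
/- Let λ > 0, 0 < b ≤ 1/2, and p ∈ [1,2). Then ∫_{λ}^{λ/√(1−b)} |w|^{p−1} |w² − λ²|^{−p/2} dw ≤ 1/(1 − p/2). -/
/-!
For `w > λ` put `u w = 1 - λ² / w²`; then `|w|^(p-1) / |w² - λ²|^(p/2) = w⁻¹ * u w ^ (-p/2)`.
On the range of integration `w² ≤ λ² / (1 - b) ≤ 2λ²`, so `w⁻¹ ≤ 2λ² / w³ = u' w` and the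
integrand is dominated by `u ^ (-p/2) * u'`. Its primitive `u ^ (1 - p/2) / (1 - p/2)` vanishes
at `λ` and equals `b ^ (1 - p/2) / (1 - p/2) ≤ 1 / (1 - p/2)` at `λ / √(1 - b)`.
-/

open Real MeasureTheory Set intervalIntegral

theorem one_sub_sq_div_sq_pos {a x : ℝ} (ha : 0 ≤ a) (hax : a < x) : 0 < 1 - a ^ 2 / x ^ 2 := by
  have hx : 0 < x := ha.trans_lt hax
  rw [sub_pos, div_lt_one (by positivity)]
  nlinarith

theorem hasDerivAt_one_sub_div_sq_rpow {c x : ℝ} (q : ℝ) (hx : x ≠ 0) (hcx : c ≠ x ^ 2) :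
    HasDerivAt (fun w : ℝ => (1 - c / w ^ 2) ^ q)
      (q * (1 - c / x ^ 2) ^ (q - 1) * (2 * c / x ^ 3)) x := by
  have hbase : HasDerivAt (fun w : ℝ => 1 - c / w ^ 2) (2 * c / x ^ 3) x := by
    refine (((hasDerivAt_const x c).div (hasDerivAt_pow 2 x) (pow_ne_zero 2 hx)).const_sub
      1).congr_deriv ?_
    field_simp
    ring
  convert hbase.rpow_const (p := q) (Or.inl ?_) using 1
  · ring
  · rw [sub_ne_zero, ne_comm, ne_eq, div_eq_one_iff_eq (pow_ne_zero 2 hx)]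
    exact hcx

section PrimitiveOneSubDivSq

variable {a m q : ℝ}

theorem hasDerivAt_one_sub_div_sq_rpow_div (ha : 0 < a) (hq : q ≠ 0) {x : ℝ} (hx : a < x) :
    HasDerivAt (fun w : ℝ => (1 - a ^ 2 / w ^ 2) ^ q / q)
      ((1 - a ^ 2 / x ^ 2) ^ (q - 1) * (2 * a ^ 2 / x ^ 3)) x := by
  refine ((hasDerivAt_one_sub_div_sq_rpow q (ha.trans hx).ne' ?_).div_const q).congr_deriv ?_
  · nlinarith
  · field_simp

theorem continuousOn_one_sub_div_sq_rpow_div (ha : 0 < a) (hq : 0 ≤ q) :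
    ContinuousOn (fun w : ℝ => (1 - a ^ 2 / w ^ 2) ^ q / q) (Icc a m) := by
  refine (ContinuousOn.rpow_const ?_ fun _ _ => Or.inr hq).div_const q
  exact continuousOn_const.sub (continuousOn_const.div (continuousOn_pow 2)
    fun x hx => pow_ne_zero 2 (ha.trans_le hx.1).ne')

theorem one_sub_div_sq_rpow_mul_nonneg (ha : 0 < a) {x : ℝ} (hx : a < x) :
    0 ≤ (1 - a ^ 2 / x ^ 2) ^ (q - 1) * (2 * a ^ 2 / x ^ 3) := by
  have hx0 : 0 < x := ha.trans hx
  have hu := one_sub_sq_div_sq_pos ha.le hx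
  positivity

theorem integrableOn_one_sub_div_sq_rpow_mul (ha : 0 < a) (hq : 0 < q) :
    IntegrableOn (fun w : ℝ => (1 - a ^ 2 / w ^ 2) ^ (q - 1) * (2 * a ^ 2 / w ^ 3)) (Ioc a m) :=
  integrableOn_deriv_of_nonneg (continuousOn_one_sub_div_sq_rpow_div ha hq.le)
    (fun _ hx => hasDerivAt_one_sub_div_sq_rpow_div ha hq.ne' hx.1)
    fun _ hx => one_sub_div_sq_rpow_mul_nonneg ha hx.1

theorem integral_one_sub_div_sq_rpow_mul (ha : 0 < a) (ham : a ≤ m) (hq : 0 < q) :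
    ∫ w in a..m, (1 - a ^ 2 / w ^ 2) ^ (q - 1) * (2 * a ^ 2 / w ^ 3) =
      (1 - a ^ 2 / m ^ 2) ^ q / q := by
  rw [integral_eq_sub_of_hasDerivAt_of_le ham (continuousOn_one_sub_div_sq_rpow_div ha hq.le)
    (fun _ hx => hasDerivAt_one_sub_div_sq_rpow_div ha hq.ne' hx.1)
    ((intervalIntegrable_iff_integrableOn_Ioc_of_le ham).2
      (integrableOn_one_sub_div_sq_rpow_mul ha hq))]
  simp [div_self (pow_ne_zero 2 ha.ne'), zero_rpow hq.ne']

end PrimitiveOneSubDivSq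

theorem abs_rpow_div_abs_sq_sub_sq_rpow {a x : ℝ} (p : ℝ) (ha : 0 < a) (hax : a < x) :
    |x| ^ (p - 1) / |x ^ 2 - a ^ 2| ^ (p / 2) = x⁻¹ * (1 - a ^ 2 / x ^ 2) ^ (-(p / 2)) := by
  have hx : 0 < x := ha.trans hax
  have hu := one_sub_sq_div_sq_pos ha.le hax
  have hsplit : x ^ 2 - a ^ 2 = x ^ 2 * (1 - a ^ 2 / x ^ 2) := by field_simp
  have hsq : (x ^ 2) ^ (p / 2) = x ^ p := by
    rw [← rpow_natCast, ← rpow_mul hx.le]; congr 1; push_cast; ring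
  rw [abs_of_pos hx, abs_of_pos (by nlinarith), hsplit, mul_rpow (by positivity) hu.le, hsq,
    rpow_sub_one hx.ne', rpow_neg hu.le]
  have := rpow_pos_of_pos hx p
  field_simp

theorem abs_rpow_div_abs_sq_sub_sq_rpow_le {a x : ℝ} (p : ℝ) (ha : 0 < a) (hax : a < x)
    (hx : x ^ 2 ≤ 2 * a ^ 2) :
    |x| ^ (p - 1) / |x ^ 2 - a ^ 2| ^ (p / 2) ≤
      (1 - a ^ 2 / x ^ 2) ^ (-(p / 2)) * (2 * a ^ 2 / x ^ 3) := by
  have hx0 : 0 < x := ha.trans hax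
  have hinv : x⁻¹ ≤ 2 * a ^ 2 / x ^ 3 := by
    rw [inv_eq_one_div, div_le_div_iff₀ hx0 (by positivity)]; nlinarith
  rw [abs_rpow_div_abs_sq_sub_sq_rpow p ha hax, mul_comm]
  have hu := one_sub_sq_div_sq_pos ha.le hax
  gcongr

theorem integral_abs_rpow_div_abs_sq_sub_sq_rpow_le {a m p : ℝ} (ha : 0 < a) (ham : a ≤ m)
    (hm : m ^ 2 ≤ 2 * a ^ 2) (hp : p < 2) :
    ∫ w in a..m, |w| ^ (p - 1) / |w ^ 2 - a ^ 2| ^ (p / 2) ≤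
      (1 - a ^ 2 / m ^ 2) ^ (1 - p / 2) / (1 - p / 2) := by
  have hq : 0 < 1 - p / 2 := by linarith
  have hexp : 1 - p / 2 - 1 = -(p / 2) := by ring
  rw [← integral_one_sub_div_sq_rpow_mul ha ham hq, hexp, integral_of_le ham, integral_of_le ham]
  refine integral_mono_of_nonneg (ae_of_all _ fun _ => by positivity) ?_
    (ae_restrict_of_forall_mem measurableSet_Ioc fun x hx =>
      abs_rpow_div_abs_sq_sub_sq_rpow_le p ha hx.1 ?_)
  · have h := integrableOn_one_sub_div_sq_rpow_mul (m := m) ha hq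
    rwa [hexp] at h
  · nlinarith [hx.1, hx.2]

theorem integral_singularity_right_general (lam b p : ℝ) (hlam : 0 < lam)
    (hb0 : 0 < b) (hb : b ≤ 1 / 2) (hp2 : p < 2) :
    ∫ w in lam..(lam / Real.sqrt (1 - b)), |w| ^ (p - 1) / |w ^ 2 - lam ^ 2| ^ (p / 2)
      ≤ 1 / (1 - p / 2) := by
  set m := lam / Real.sqrt (1 - b)
  have h1b : 0 < 1 - b := by linarith
  have hs : 0 < Real.sqrt (1 - b) := Real.sqrt_pos.2 h1b
  have hratio : lam ^ 2 / m ^ 2 = 1 - b := by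
    rw [div_pow, Real.sq_sqrt h1b.le]; field_simp
  have hm : m ^ 2 ≤ 2 * lam ^ 2 := by
    rw [div_eq_iff (by positivity)] at hratio; nlinarith
  have hlm : lam ≤ m :=
    le_div_self hlam.le hs (Real.sqrt_le_one.2 (by linarith))
  calc _ ≤ (1 - lam ^ 2 / m ^ 2) ^ (1 - p / 2) / (1 - p / 2) :=
        integral_abs_rpow_div_abs_sq_sub_sq_rpow_le hlam hlm hm hp2
    _ = b ^ (1 - p / 2) / (1 - p / 2) := by rw [hratio, sub_sub_cancel]
    _ ≤ 1 / (1 - p / 2) := by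
        gcongr
        · linarith
        · exact rpow_le_one hb0.le (by linarith) (by linarith)

/-- Elementary integral estimate (second half of the potential-barrier singularity):
for `λ > 0`, `0 < b ≤ 1/2` and `p ∈ [1,2)`,
`∫_{λ}^{λ/√(1-b)} |w|^{p-1} |w² - λ²|^{-p/2} dw ≤ 1/(1-p/2)`. -/
theorem integral_singularity_right (lam b p : ℝ) (hlam : 0 < lam)
    (hb0 : 0 < b) (hb : b ≤ 1 / 2) (hp1 : 1 ≤ p) (hp2 : p < 2) :
    ∫ w in lam..(lam / Real.sqrt (1 - b)), |w| ^ (p - 1) / |w ^ 2 - lam ^ 2| ^ (p / 2)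
      ≤ 1 / (1 - p / 2) :=
  integral_singularity_right_general lam b p hlam hb0 hb hp2
end
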